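/- arXiv:1312.5305 — 5 statements merged into one kernel-verified Lean document; each statement's English description precedes it below -/
import Mathlib

section
/- Let p be a prime, let S be a ℤ_p-algebra that is finitely generated as a ℤ_p-module, and let σ = (F₁, …, F_d) be a ℤ_p-algebra automorphism of ℤ_p[x₁, …, x_d]. Then there exists a positive integer m such that for every point s₀ = (s₁, …, s_d) ∈ S^d satisfying f_σ(s₁, …, s_d) ≡ (s₁, …, s_d) (mod pS) componentwise, the Jacobian matrix of σ^m evaluated at s₀ is congruent to the d×d identity matrix modulo pS. -/
open MvPolynomial Finset

/-- Multivariate chain rule for `pderiv` and `aeval` into polynomials. -/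
theorem stmt5_chain {K : Type*} [CommSemiring K] {d : ℕ} (F : Fin d → MvPolynomial (Fin d) K)
    (j : Fin d) (P : MvPolynomial (Fin d) K) :
    pderiv j (aeval F P) = ∑ k, aeval F (pderiv k P) * pderiv j (F k) := by
  induction P using MvPolynomial.induction_on with
  | C a => simp
  | add f g hf hg =>
      rw [map_add, map_add, hf, hg, ← Finset.sum_add_distrib]
      exact Finset.sum_congr rfl fun k _ => by simp [map_add, add_mul]
  | mul_X f k hf =>
      have key : ∀ x ∈ Finset.univ, (aeval F) ((pderiv x) (f * X k)) * (pderiv j) (F x)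
          = (aeval F) ((pderiv x) f) * (pderiv j) (F x) * F k
            + (if k = x then (aeval F) f * (pderiv j) (F k) else 0) := by
        intro x _
        rcases eq_or_ne k x with h|h
        · subst h; simp [pderiv_mul, pderiv_X_self, add_mul]; ring
        · simp [pderiv_mul, pderiv_X_of_ne h, h, add_mul]; ring
      rw [map_mul, aeval_X, pderiv_mul, hf, Finset.sum_mul, Finset.sum_congr rfl key,
        Finset.sum_add_distrib, Finset.sum_ite_eq Finset.univ k]
      simp [mul_comm]

/-- The quotient of a module-finite `ℤ_[p]`-algebra by `(p)` is finite. -/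
theorem stmt5_finite (p : ℕ) [Fact p.Prime] (S : Type*) [CommRing S] [Algebra ℤ_[p] S]
    [Module.Finite ℤ_[p] S] : Finite (S ⧸ Ideal.span {(p : S)}) := by
  obtain ⟨n, f, hf⟩ := Module.Finite.exists_fin' ℤ_[p] S
  set I : Ideal S := Ideal.span {(p : S)}
  let q : S →+* S ⧸ I := Ideal.Quotient.mk I
  have hq : Function.Surjective q := Ideal.Quotient.mk_surjective
  let g : (Fin n → Fin p) → S ⧸ I := fun c => q (f (fun i => ((c i : ℕ) : ℤ_[p])))
  have hg : Function.Surjective g := by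
    intro y
    obtain ⟨x, rfl⟩ := hq y
    obtain ⟨a, rfl⟩ := hf x
    refine ⟨fun i => ⟨PadicInt.zmodRepr (a i), PadicInt.zmodRepr_lt_p (a i)⟩, ?_⟩
    have hmem : ∀ i, a i - ((PadicInt.zmodRepr (a i) : ℕ) : ℤ_[p]) ∈
        Ideal.span {(p : ℤ_[p])} := by
      intro i
      rw [← PadicInt.maximalIdeal_eq_span_p]
      exact PadicInt.sub_zmodRepr_mem (a i)
    choose b hb using fun i => Ideal.mem_span_singleton'.mp (hmem i)
    show q (f _) = q (f a)
    rw [Ideal.Quotient.mk_eq_mk_iff_sub_mem, ← map_sub]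
    have hd : ((fun i => (((⟨PadicInt.zmodRepr (a i), PadicInt.zmodRepr_lt_p (a i)⟩ : Fin p) : ℕ) : ℤ_[p])) - a)
        = (-(p : ℤ_[p])) • b := by
      funext i
      simp only [Pi.sub_apply, Pi.smul_apply, smul_eq_mul]
      rw [neg_mul, ← mul_comm (b i), hb i]
      ring
    rw [hd, map_smul, Algebra.smul_def, map_neg, map_natCast, neg_mul]
    exact I.neg_mem (Ideal.mul_mem_right _ _ (Ideal.subset_span rfl))
  exact Finite.of_surjective g hg

/-- **Approximate fixed points have invertible Jacobians (Lemma 2.1).**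
Let `p` be a prime, `S` a `ℤ_p`-algebra that is finitely generated as a
`ℤ_p`-module, and `σ` a `ℤ_p`-algebra automorphism of `ℤ_p[x₁, …, x_d]`. Then
there is a positive integer `m` such that for every `s₀ ∈ S^d` with
`f_σ(s₀) ≡ s₀ (mod pS)` componentwise, the Jacobian matrix of `σ^m` evaluated at
`s₀` is congruent to the identity matrix modulo `pS`. -/
theorem stmt5 (p : ℕ) [Fact p.Prime] (S : Type*) [CommRing S] [Algebra ℤ_[p] S]
    [Module.Finite ℤ_[p] S] (d : ℕ)
    (σ : MvPolynomial (Fin d) ℤ_[p] ≃ₐ[ℤ_[p]] MvPolynomial (Fin d) ℤ_[p]) :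
    ∃ m : ℕ, 0 < m ∧ ∀ s : Fin d → S,
      (∀ i : Fin d, aeval s (σ (X i)) - s i ∈ Ideal.span {(p : S)}) →
      ∀ i j : Fin d,
        aeval s (pderiv j ((σ ^ m : MvPolynomial (Fin d) ℤ_[p] ≃ₐ[ℤ_[p]] MvPolynomial (Fin d) ℤ_[p]) (X i)))
          - (if i = j then 1 else 0) ∈ Ideal.span {(p : S)} := by
  classical
  set I : Ideal S := Ideal.span {(p : S)} with hI
  let R := S ⧸ I
  have hRfin : Finite R := stmt5_finite p S
  let G := (Matrix (Fin d) (Fin d) R)ˣ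
  have hGfin : Finite G := inferInstance
  refine ⟨Nat.card G, Nat.card_pos, ?_⟩
  intro s hs i j
  set m := Nat.card G with hm
  let q : S →+* R := Ideal.Quotient.mk I
  let e : MvPolynomial (Fin d) ℤ_[p] →+* R := q.comp (aeval s : MvPolynomial (Fin d) ℤ_[p] →ₐ[ℤ_[p]] S).toRingHom
  have he_apply : ∀ P, e P = q (aeval s P) := fun P => rfl
  -- representation of an algebra endomorphism as aeval
  have hrep : ∀ (τ : MvPolynomial (Fin d) ℤ_[p] ≃ₐ[ℤ_[p]] MvPolynomial (Fin d) ℤ_[p])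
      (Q : MvPolynomial (Fin d) ℤ_[p]), τ Q = aeval (fun k => τ (X k)) Q := by
    intro τ Q
    conv_lhs => rw [show τ Q = τ.toAlgHom Q from rfl, aeval_unique τ.toAlgHom]
    rfl
  -- evaluation along a fixed-mod-p family
  have he : ∀ (F : Fin d → MvPolynomial (Fin d) ℤ_[p]), (∀ k, e (F k) = e (X k)) →
      ∀ Q, e (aeval F Q) = e Q := by
    intro F hF Q
    conv_rhs => rw [← eval₂_eta Q]
    rw [aeval_def, eval₂_comp_left e, eval₂_comp_left e]
    congr 1
    · funext k; exact hF k
  have hfix : ∀ k, e (σ (X k)) = e (X k) := by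
    intro k
    rw [he_apply, he_apply, aeval_X, ← sub_eq_zero, ← map_sub]
    exact Ideal.Quotient.eq_zero_iff_mem.mpr (hs k)
  have hfixn : ∀ n k, e ((σ ^ n) (X k)) = e (X k) := by
    intro n
    induction n with
    | zero => intro k; simp
    | succ n ih =>
        intro k
        rw [pow_succ', AlgEquiv.mul_apply, hrep σ ((σ ^ n) (X k)), he _ hfix, ih k]
  -- the Jacobian matrices mod p
  let A : Matrix (Fin d) (Fin d) R := Matrix.of fun i j => e (pderiv j (σ (X i)))
  have hM : ∀ n, (Matrix.of fun i j => e (pderiv j ((σ ^ n) (X i)))) = A ^ n := by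
    intro n
    induction n with
    | zero =>
        ext a b
        simp only [pow_zero, Matrix.of_apply, Matrix.one_apply]
        rcases eq_or_ne a b with h | h
        · subst h; simp
        · simp [pderiv_X_of_ne (Ne.symm h), h]
    | succ n ih =>
        ext a b
        have h1 : ((σ ^ (n+1)) (X a)) = aeval (fun k => (σ ^ n) (X k)) (σ (X a)) := by
          rw [pow_succ, AlgEquiv.mul_apply, hrep (σ ^ n) (σ (X a))]
        show e (pderiv b ((σ ^ (n+1)) (X a))) = (A ^ (n+1)) a b
        rw [h1, stmt5_chain, map_sum, pow_succ', Matrix.mul_apply, ← ih]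
        refine Finset.sum_congr rfl fun k _ => ?_
        rw [map_mul, he _ (fun k' => hfixn n k')]
        rfl
  -- invertibility of A
  let B : Matrix (Fin d) (Fin d) R := Matrix.of fun i j => e (pderiv j (σ.symm (X i)))
  have hBA : B * A = 1 := by
    ext a b
    have h1 : (X a : MvPolynomial (Fin d) ℤ_[p]) = aeval (fun k => σ (X k)) (σ.symm (X a)) := by
      rw [← hrep σ (σ.symm (X a)), σ.apply_symm_apply]
    have h2 : e (pderiv b (X a : MvPolynomial (Fin d) ℤ_[p])) = (1 : Matrix (Fin d) (Fin d) R) a b := by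
      rcases eq_or_ne a b with h | h
      · subst h; simp [Matrix.one_apply]
      · simp [pderiv_X_of_ne (Ne.symm h), Matrix.one_apply, h]
    rw [Matrix.mul_apply, ← h2, h1, stmt5_chain, map_sum]
    refine (Finset.sum_congr rfl fun k _ => ?_).symm
    rw [map_mul, he _ hfix]
    rfl
  have hAunit : A ^ m = 1 := by
    let u : G := ⟨A, B, mul_eq_one_comm.mpr hBA, hBA⟩
    calc A ^ m = ((u ^ m : G) : Matrix (Fin d) (Fin d) R) := by
          rw [Units.val_pow_eq_pow_val]
      _ = ((1 : G) : Matrix (Fin d) (Fin d) R) := by rw [pow_card_eq_one']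
      _ = 1 := Units.val_one
  -- conclude
  have hentry : e (pderiv j ((σ ^ m) (X i))) = (1 : Matrix (Fin d) (Fin d) R) i j := by
    have := congrFun (congrFun (hM m) i) j
    rw [Matrix.of_apply] at this
    rw [this, hAunit]
  rw [← Ideal.Quotient.eq_zero_iff_mem (I := I), map_sub]
  have h3 : q (aeval s (pderiv j ((σ ^ m) (X i)))) = (1 : Matrix (Fin d) (Fin d) R) i j := hentry
  rw [h3, Matrix.one_apply]
  rcases eq_or_ne i j with h | h
  · subst h; simp
  · simp [h]
end

section
/- Let p be a prime and let R be a finite-dimensional ℚ_p-algebra. Suppose f(z) = ∑_{k≥0} a_k z^k ∈ R[[z]] is a formal power series whose coefficients tend to 0 (with respect to any ℚ_p-vector-space norm on R), so that f converges absolutely at every z ∈ ℤ_p. If f has infinitely many zeros in ℤ_p, then f is identically zero, i.e., a_k = 0 for all k. -/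
/-!
Strassman's argument. Let `N` be the last index at which `‖aₖ‖` is maximal. If `α` is a zero of
`f(z) = ∑ aₖ zᵏ` in the unit ball, then `f(z) - f(α) = (z - α) g(z)`, where the coefficients
`bₖ = ∑ⱼ αʲ a_{k+1+j}` of `g` satisfy `bₖ = a_{k+1} + α b_{k+1}`. The ultrametric inequality
makes `N - 1` the last index of maximal `‖bₖ‖`, so by induction `f` has at most `N` zeros in the
unit ball. Over a finite-dimensional algebra, apply this to each coordinate of the coefficients
in a basis.
-/

open Filter Topology IsUltrametricDist

def IsLastMaxIndex (u : ℕ → ℝ) (N : ℕ) : Prop :=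
  (∀ k, u k ≤ u N) ∧ ∀ k, N < k → u k < u N

section MaxIndex

variable {u : ℕ → ℝ}

lemma exists_forall_le_of_tendsto_zero (hu : Tendsto u atTop (𝓝 0)) (h0 : ∀ k, 0 ≤ u k) :
    ∃ n, ∀ k, u k ≤ u n := by
  by_cases hpos : ∃ k₀, 0 < u k₀
  · obtain ⟨k₀, hk₀⟩ := hpos
    obtain ⟨K, hK⟩ := eventually_atTop.mp (hu.eventually_lt_const hk₀)
    obtain ⟨n, -, hn⟩ :=
      (Finset.range (K + k₀ + 1)).exists_max_image u ⟨k₀, by simp⟩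
    refine ⟨n, fun k => ?_⟩
    rcases lt_or_ge k K with hk | hk
    · exact hn k (by simp; omega)
    · exact (hK k hk).le.trans (hn k₀ (by simp))
  · push Not at hpos
    exact ⟨0, fun k => (hpos k).trans (h0 0)⟩

lemma exists_isLastMaxIndex (hu : Tendsto u atTop (𝓝 0)) (h0 : ∀ k, 0 ≤ u k)
    (hpos : ∃ k, 0 < u k) : ∃ N, IsLastMaxIndex u N := by
  obtain ⟨n, hn⟩ := exists_forall_le_of_tendsto_zero hu h0
  obtain ⟨k₀, hk₀⟩ := hpos
  have hfin : {k | u k = u n}.Finite := by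
    have hsmall := hu.eventually_lt_const (hk₀.trans_le (hn k₀))
    rw [← Nat.cofinite_eq_atTop, eventually_cofinite] at hsmall
    exact hsmall.subset fun k (hk : u k = u n) => hk.not_lt
  obtain ⟨N, hNn, hNmax⟩ := Set.exists_max_image _ id hfin ⟨n, rfl⟩
  refine ⟨N, fun k => hNn ▸ hn k, fun k hk => hNn ▸ (hn k).lt_of_ne fun hkn => ?_⟩
  exact hk.not_ge (hNmax k hkn)

lemma IsLastMaxIndex.exists_tail_bound {N : ℕ} (hN : IsLastMaxIndex u N)
    (hu : Tendsto u atTop (𝓝 0)) (h0 : ∀ k, 0 ≤ u k) : ∃ r < u N, ∀ k, N < k → u k ≤ r := by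
  obtain ⟨n, hn⟩ := exists_forall_le_of_tendsto_zero
    (hu.comp (tendsto_add_atTop_nat (N + 1))) (fun k => h0 _)
  refine ⟨u (n + (N + 1)), hN.2 _ (by omega), fun k hk => ?_⟩
  simpa [Nat.sub_add_cancel hk] using hn (k - (N + 1))

end MaxIndex

section PowerSeries

variable {K : Type*} [NormedField K] {a : ℕ → K} {z α : K}

lemma norm_mul_le_of_norm_le_one (hz : ‖z‖ ≤ 1) (x : K) : ‖z * x‖ ≤ ‖x‖ := by
  rw [norm_mul]
  exact mul_le_of_le_one_left (norm_nonneg x) hz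

lemma norm_pow_mul_le (hz : ‖z‖ ≤ 1) (k : ℕ) (x : K) : ‖z ^ k * x‖ ≤ ‖x‖ :=
  norm_mul_le_of_norm_le_one (by rw [norm_pow]; exact pow_le_one₀ (norm_nonneg z) hz) x

-- the coefficients of the power series `(f z - f α) / (z - α)`, where `f z = ∑ aₖ zᵏ`
noncomputable def divCoeff (a : ℕ → K) (α : K) (k : ℕ) : K :=
  ∑' j, α ^ j * a (j + (k + 1))

variable [IsUltrametricDist K]

lemma norm_tsum_pow_mul_le (hz : ‖z‖ ≤ 1) {r : ℝ} (h : ∀ k, ‖a k‖ ≤ r) :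
    ‖∑' k, z ^ k * a k‖ ≤ r :=
  norm_tsum_le_of_forall_le_of_nonneg ((norm_nonneg _).trans (h 0))
    fun k => (norm_pow_mul_le hz k (a k)).trans (h k)

lemma norm_divCoeff_le (hα : ‖α‖ ≤ 1) {k : ℕ} {r : ℝ} (h : ∀ m, k < m → ‖a m‖ ≤ r) :
    ‖divCoeff a α k‖ ≤ r :=
  norm_tsum_pow_mul_le hα fun j => h _ (by omega)

lemma tendsto_norm_divCoeff (ha : Tendsto (fun k => ‖a k‖) atTop (𝓝 0)) (hα : ‖α‖ ≤ 1) :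
    Tendsto (fun k => ‖divCoeff a α k‖) atTop (𝓝 0) := by
  refine tendsto_order.2 ⟨fun c hc => .of_forall fun k => hc.trans_le (norm_nonneg _),
    fun ε hε => ?_⟩
  obtain ⟨M, hM⟩ := eventually_atTop.mp (ha.eventually_lt_const (half_pos hε))
  refine eventually_atTop.mpr ⟨M, fun k hk => ?_⟩
  exact (norm_divCoeff_le hα fun m hm => (hM m (by omega)).le).trans_lt (half_lt_self hε)

variable [CompleteSpace K]

lemma summable_pow_mul (ha : Tendsto (fun k => ‖a k‖) atTop (𝓝 0)) (hz : ‖z‖ ≤ 1) :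
    Summable fun k => z ^ k * a k := by
  refine NonarchimedeanAddGroup.summable_of_tendsto_cofinite_zero ?_
  rw [Nat.cofinite_eq_atTop, tendsto_zero_iff_norm_tendsto_zero]
  exact squeeze_zero (fun _ => norm_nonneg _) (fun k => norm_pow_mul_le hz k (a k)) ha

lemma tsum_pow_mul_eq_add (ha : Tendsto (fun k => ‖a k‖) atTop (𝓝 0)) (hz : ‖z‖ ≤ 1) :
    ∑' k, z ^ k * a k = a 0 + z * ∑' k, z ^ k * a (k + 1) := by
  rw [(summable_pow_mul ha hz).tsum_eq_zero_add, ← tsum_mul_left]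
  simp only [pow_zero, one_mul, pow_succ, mul_assoc, mul_left_comm z]

lemma divCoeff_eq_add (ha : Tendsto (fun k => ‖a k‖) atTop (𝓝 0)) (hα : ‖α‖ ≤ 1) (k : ℕ) :
    divCoeff a α k = a (k + 1) + α * divCoeff a α (k + 1) := by
  rw [divCoeff, tsum_pow_mul_eq_add (ha.comp (tendsto_add_atTop_nat (k + 1))) hα]
  simp only [zero_add, divCoeff, add_right_comm _ 1 (k + 1), add_assoc]

lemma tsum_pow_mul_eq_add_divCoeff (ha : Tendsto (fun k => ‖a k‖) atTop (𝓝 0)) (hα : ‖α‖ ≤ 1) :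
    ∑' k, α ^ k * a k = a 0 + α * divCoeff a α 0 :=
  tsum_pow_mul_eq_add ha hα

lemma tsum_sub_tsum_eq_mul (ha : Tendsto (fun k => ‖a k‖) atTop (𝓝 0)) (hz : ‖z‖ ≤ 1)
    (hα : ‖α‖ ≤ 1) :
    ∑' k, z ^ k * a k - ∑' k, α ^ k * a k = (z - α) * ∑' k, z ^ k * divCoeff a α k := by
  set b := divCoeff a α
  have hb := tendsto_norm_divCoeff ha hα
  have hb_shift : Summable fun k => z ^ k * b (k + 1) :=
    summable_pow_mul (hb.comp (tendsto_add_atTop_nat 1)) hz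
  have hshift : ∑' k, z ^ k * a (k + 1) =
      ∑' k, z ^ k * b k - α * ∑' k, z ^ k * b (k + 1) := by
    rw [← tsum_mul_left, ← (summable_pow_mul hb hz).tsum_sub (hb_shift.mul_left α)]
    exact tsum_congr fun k => by rw [divCoeff_eq_add ha hα k]; ring
  rw [tsum_pow_mul_eq_add ha hz, tsum_pow_mul_eq_add_divCoeff ha hα, hshift]
  linear_combination α * tsum_pow_mul_eq_add hb hz

end PowerSeries

section Strassman

variable {K : Type*} [NormedField K] [IsUltrametricDist K] [CompleteSpace K] {a : ℕ → K}

lemma isLastMaxIndex_divCoeff {N : ℕ} (hN : IsLastMaxIndex (fun k => ‖a k‖) (N + 1))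
    (ha : Tendsto (fun k => ‖a k‖) atTop (𝓝 0)) {α : K} (hα : ‖α‖ ≤ 1) :
    IsLastMaxIndex (fun k => ‖divCoeff a α k‖) N := by
  obtain ⟨r, hr, hr_tail⟩ := hN.exists_tail_bound ha fun _ => norm_nonneg _
  have h_tail : ∀ k, N < k → ‖divCoeff a α k‖ ≤ r :=
    fun k hk => norm_divCoeff_le hα fun m hm => hr_tail m (by omega)
  have h_lead : ‖divCoeff a α N‖ = ‖a (N + 1)‖ := by
    have h_small : ‖α * divCoeff a α (N + 1)‖ < ‖a (N + 1)‖ :=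
      (norm_mul_le_of_norm_le_one hα _).trans_lt ((h_tail _ N.lt_succ_self).trans_lt hr)
    rw [divCoeff_eq_add ha hα, norm_add_eq_max_of_norm_ne_norm h_small.ne',
      max_eq_left h_small.le]
  simp only [IsLastMaxIndex]
  refine ⟨fun k => ?_, fun k hk => ?_⟩
  · exact h_lead ▸ norm_divCoeff_le hα fun m _ => hN.1 m
  · exact h_lead ▸ (h_tail k hk).trans_lt hr

theorem encard_zeros_le (ha : Tendsto (fun k => ‖a k‖) atTop (𝓝 0)) {N : ℕ}
    (hN : IsLastMaxIndex (fun k => ‖a k‖) N) :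
    {z : K | ‖z‖ ≤ 1 ∧ ∑' k, z ^ k * a k = 0}.encard ≤ N := by
  induction N generalizing a with
  | zero =>
    obtain ⟨r, hr, hr_tail⟩ := hN.exists_tail_bound ha fun _ => norm_nonneg _
    refine (Set.encard_eq_zero.mpr (Set.eq_empty_of_forall_notMem ?_)).le
    rintro z ⟨hz, hfz⟩
    rw [tsum_pow_mul_eq_add ha hz, add_eq_zero_iff_eq_neg] at hfz
    have h_rest : ‖z * ∑' k, z ^ k * a (k + 1)‖ ≤ r :=
      (norm_mul_le_of_norm_le_one hz _).trans
        (norm_tsum_pow_mul_le hz fun k => hr_tail _ k.succ_pos)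
    exact hr.not_ge (by rwa [hfz, norm_neg])
  | succ N ih =>
    rcases Set.eq_empty_or_nonempty {z : K | ‖z‖ ≤ 1 ∧ ∑' k, z ^ k * a k = 0} with
      h | ⟨α, hα, hfα⟩
    · simp [h]
    have h_sub : {z : K | ‖z‖ ≤ 1 ∧ ∑' k, z ^ k * a k = 0} ⊆
        insert α {z : K | ‖z‖ ≤ 1 ∧ ∑' k, z ^ k * divCoeff a α k = 0} := by
      rintro z ⟨hz, hfz⟩
      rw [Set.mem_insert_iff, or_iff_not_imp_left]
      intro hzα
      have h := tsum_sub_tsum_eq_mul ha hz hα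
      rw [hfz, hfα, sub_zero, eq_comm, mul_eq_zero, sub_eq_zero] at h
      exact ⟨hz, h.resolve_left hzα⟩
    calc _ ≤ _ := Set.encard_le_encard h_sub
      _ ≤ _ + 1 := Set.encard_insert_le _ _
      _ ≤ N + 1 := by
        gcongr
        exact ih (tendsto_norm_divCoeff ha hα) (isLastMaxIndex_divCoeff hN ha hα)
      _ = ((N + 1 : ℕ) : ℕ∞) := by norm_cast

theorem eq_zero_of_infinite_zeros (ha : Tendsto (fun k => ‖a k‖) atTop (𝓝 0))
    (hz : {z : K | ‖z‖ ≤ 1 ∧ ∑' k, z ^ k * a k = 0}.Infinite) : ∀ k, a k = 0 := by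
  by_contra! h
  obtain ⟨k, hk⟩ := h
  obtain ⟨N, hN⟩ := exists_isLastMaxIndex ha (fun _ => norm_nonneg _) ⟨k, norm_pos_iff.mpr hk⟩
  exact hz (Set.finite_of_encard_le_coe (encard_zeros_le ha hN))

end Strassman

theorem eq_zero_of_infinite_zeros_of_finiteDimensional {K E : Type*} [NontriviallyNormedField K]
    [IsUltrametricDist K] [CompleteSpace K] [NormedAddCommGroup E] [NormedSpace K E]
    [FiniteDimensional K E] {a : ℕ → E} (ha : Tendsto (fun k => ‖a k‖) atTop (𝓝 0))
    (hz : {z : K | ‖z‖ ≤ 1 ∧ ∑' k, z ^ k • a k = 0}.Infinite) : ∀ k, a k = 0 := by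
  let e := (Module.finBasis K E).equivFunL
  have h_coord_tendsto (i) : Tendsto (fun k => ‖e (a k) i‖) atTop (𝓝 0) := by
    rw [← tendsto_zero_iff_norm_tendsto_zero] at ha ⊢
    simpa [Function.comp_def] using (((continuous_apply i).comp e.continuous).tendsto 0).comp ha
  have h_coord_tsum {z : K} (hz : ‖z‖ ≤ 1) (i) :
      e (∑' k, z ^ k • a k) i = ∑' k, z ^ k * e (a k) i := by
    rw [e.map_tsum, tsum_apply (Pi.summable.mpr fun j => ?_)]
    · simp
    · simpa using summable_pow_mul (h_coord_tendsto j) hz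
  have h_coord_zero (i) (k) : e (a k) i = 0 := by
    refine eq_zero_of_infinite_zeros (h_coord_tendsto i) (hz.mono ?_) k
    rintro z ⟨hz, hfz⟩
    exact ⟨hz, by rw [← h_coord_tsum hz, hfz, map_zero, Pi.zero_apply]⟩
  exact fun k => e.map_eq_zero_iff.mp (funext fun i => h_coord_zero i k)

/-- **Extended Strassman theorem (Theorem 2.4).** Let `p` be a prime and `R` a
finite-dimensional normed `ℚ_p`-algebra. Suppose `f(z) = ∑ aₖ zᵏ ∈ R[[z]]` has
coefficients tending to `0` in norm (so that the series converges at every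
`z ∈ ℤ_p`). If `f` has infinitely many zeros in `ℤ_p`, then `f` is identically
zero, i.e. `aₖ = 0` for all `k`. -/
theorem stmt7 (p : ℕ) [Fact p.Prime] (R : Type*) [NormedCommRing R]
    [NormedAlgebra ℚ_[p] R] [FiniteDimensional ℚ_[p] R]
    (a : ℕ → R)
    (ha : Filter.Tendsto (fun k => ‖a k‖) Filter.atTop (nhds 0))
    (hz : {z : ℤ_[p] | (∑' k : ℕ, ((z : ℚ_[p]) ^ k) • a k) = 0}.Infinite) :
    ∀ k : ℕ, a k = 0 := by
  refine eq_zero_of_infinite_zeros_of_finiteDimensional ha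
    ((hz.image Subtype.val_injective.injOn).mono ?_)
  rintro _ ⟨z, hz, rfl⟩
  exact ⟨z.2, hz⟩
end

section
/- Let p be a prime and let S be a ℤ_p-algebra that is finitely generated and torsion-free as a ℤ_p-module. Suppose Q₁(z), …, Q_d(z) ∈ R(S) are polynomials of degree at most N. Then there exists (h₁(z), …, h_d(z)) ∈ R(S)^d satisfying h_i(z+1) ≡ h_i(z) − Q_i(z) (mod p·R(S)) for 1 ≤ i ≤ d, such that h₁(0) = ⋯ = h_d(0) = 0 and each h_i has degree at most N + 1. -/
open TensorProduct

/-- `f` belongs to `R(S)`: a polynomial with coefficients in `ℚ_p ⊗_{ℤ_p} S`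
whose value at every `z ∈ ℤ_p` lies in `S` (identified with `S ⊗ 1`). -/
def MemRS (p : ℕ) [Fact p.Prime] {S : Type*} [CommRing S] [Algebra ℤ_[p] S]
    (f : Polynomial (ℚ_[p] ⊗[ℤ_[p]] S)) : Prop :=
  ∀ z : ℤ_[p], ∃ s : S,
    f.eval (algebraMap ℤ_[p] (ℚ_[p] ⊗[ℤ_[p]] S) z) = (1 : ℚ_[p]) ⊗ₜ[ℤ_[p]] s


open Polynomial

section Aux

variable (p : ℕ) [Fact p.Prime] {S : Type*} [CommRing S] [Algebra ℤ_[p] S]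

lemma dp_eval_coe (z : ℤ_[p]) (k : ℕ) :
    (descPochhammer ℚ_[p] k).eval (z : ℚ_[p]) = ((k.factorial • Ring.choose z k : ℤ_[p]) : ℚ_[p]) := by
  have h : (descPochhammer ℤ_[p] k).eval z = k.factorial • Ring.choose z k := by
    rw [← descPochhammer_map (Int.castRingHom ℤ_[p]) k, Polynomial.eval_map,
      show (Int.castRingHom ℤ_[p]) = RingHom.smulOneHom from Subsingleton.elim _ _,
      Polynomial.eval₂_smulOneHom_eq_smeval]
    exact Ring.descPochhammer_eq_factorial_smul_choose z k
  rw [← descPochhammer_map (algebraMap ℤ_[p] ℚ_[p]) k,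
    show ((z : ℚ_[p])) = algebraMap ℤ_[p] ℚ_[p] z from rfl, Polynomial.eval_map,
    Polynomial.eval₂_at_apply, h, PadicInt.algebraMap_apply]

example (z : ℤ_[p]) : algebraMap ℤ_[p] (ℚ_[p] ⊗[ℤ_[p]] S) z = algebraMap ℚ_[p] (ℚ_[p] ⊗[ℤ_[p]] S) (z : ℚ_[p]) := rfl

noncomputable def bp (k : ℕ) : Polynomial ℚ_[p] :=
  C ((k.factorial : ℚ_[p])⁻¹) * descPochhammer ℚ_[p] k

lemma fact_ne (k : ℕ) : ((k.factorial : ℚ_[p])) ≠ 0 :=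
  Nat.cast_ne_zero.mpr k.factorial_ne_zero

lemma bp_eval_coe (z : ℤ_[p]) (k : ℕ) :
    (bp p k).eval (z : ℚ_[p]) = ((Ring.choose z k : ℤ_[p]) : ℚ_[p]) := by
  rw [bp, eval_mul, eval_C, dp_eval_coe, nsmul_eq_mul, PadicInt.coe_mul, PadicInt.coe_natCast,
    ← mul_assoc, inv_mul_cancel₀ (fact_ne p k), one_mul]

lemma bp_eval_zero (k : ℕ) : (bp p (k + 1)).eval 0 = 0 := by
  rw [bp, eval_mul, descPochhammer_ne_zero_eval_zero (R := ℚ_[p]) (Nat.succ_ne_zero k), mul_zero]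

lemma bp_natDegree_le (k : ℕ) : (bp p k).natDegree ≤ k := by
  refine (natDegree_C_mul_le _ _).trans ?_
  rw [descPochhammer_natDegree (R := ℚ_[p]) k]

lemma bp_coeff_self (k : ℕ) : (bp p k).coeff k = (k.factorial : ℚ_[p])⁻¹ := by
  have h : (descPochhammer ℚ_[p] k).coeff k = 1 := by
    have h2 := (monic_descPochhammer ℚ_[p] k).coeff_natDegree
    rwa [descPochhammer_natDegree (R := ℚ_[p]) k] at h2
  rw [bp, coeff_C_mul, h, mul_one]

lemma dp_diff (k : ℕ) :
    (descPochhammer ℚ_[p] (k + 1)).comp (X + 1) - descPochhammer ℚ_[p] (k + 1)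
      = C ((k : ℚ_[p]) + 1) * descPochhammer ℚ_[p] k := by
  have h1 : (descPochhammer ℚ_[p] (k + 1)).comp (X + 1)
      = (X + 1) * descPochhammer ℚ_[p] k := by
    rw [descPochhammer_succ_left, mul_comp, X_comp, comp_assoc, sub_comp, X_comp, one_comp,
      add_sub_cancel_right, comp_X]
  rw [h1, descPochhammer_succ_right,
    show C ((k : ℚ_[p]) + 1) = ((k : Polynomial ℚ_[p]) + 1) by rw [C_add, C_1, C_eq_natCast]]
  ring

lemma bp_diff (k : ℕ) :
    (bp p (k + 1)).comp (X + 1) - bp p (k + 1) = bp p k := by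
  rw [bp, bp, mul_comp, C_comp, ← mul_sub, dp_diff, ← mul_assoc, ← C_mul]
  congr 2
  have h1 : ((k : ℚ_[p]) + 1) ≠ 0 := Nat.cast_add_one_ne_zero k
  rw [Nat.factorial_succ, Nat.cast_mul, mul_inv]
  push_cast
  rw [mul_comm ((k : ℚ_[p]) + 1)⁻¹, mul_assoc, inv_mul_cancel₀ h1, mul_one]

lemma coeff_comp_X_add_one {R : Type*} [CommRing R] (f : Polynomial R) (m : ℕ)
    (hf : f.natDegree ≤ m + 1) :
    (f.comp (X + 1)).coeff m = f.coeff m + ((m + 1 : ℕ) : R) * f.coeff (m + 1) := by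
  conv_lhs => rw [f.as_sum_range' (m + 2) (lt_of_le_of_lt hf (by omega))]
  rw [Polynomial.sum_comp, finset_sum_coeff]
  have hterm : ∀ i, ((monomial i (f.coeff i)).comp (X + 1)).coeff m
      = f.coeff i * ((i.choose m : ℕ) : R) := by
    intro i
    rw [monomial_comp, coeff_C_mul, coeff_X_add_one_pow]
  simp only [hterm]
  rw [Finset.sum_range_succ, Finset.sum_range_succ, Nat.choose_succ_self_right,
    Nat.choose_self, Nat.cast_one, mul_one]
  have hz : ∀ i ∈ Finset.range m, f.coeff i * ((i.choose m : ℕ) : R) = 0 := by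
    intro i hi
    rw [Nat.choose_eq_zero_of_lt (Finset.mem_range.mp hi), Nat.cast_zero, mul_zero]
  rw [Finset.sum_eq_zero hz, zero_add, mul_comm (f.coeff (m + 1))]

lemma D_natDegree_le {R : Type*} [CommRing R] (f : Polynomial R) (m : ℕ)
    (hf : f.natDegree ≤ m + 1) : (f.comp (X + 1) - f).natDegree ≤ m := by
  rw [natDegree_le_iff_coeff_eq_zero]
  intro j hj
  rw [coeff_sub, coeff_comp_X_add_one f j (hf.trans (by omega)),
    coeff_eq_zero_of_natDegree_lt (show f.natDegree < j + 1 by omega), mul_zero, add_zero,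
    sub_self]

lemma D_coeff {R : Type*} [CommRing R] (f : Polynomial R) (m : ℕ)
    (hf : f.natDegree ≤ m + 1) :
    (f.comp (X + 1) - f).coeff m = ((m + 1 : ℕ) : R) * f.coeff (m + 1) := by
  rw [coeff_sub, coeff_comp_X_add_one f m hf, add_sub_cancel_left]

lemma D_iter {R : Type*} [CommRing R] (f : Polynomial R) :
    ∀ k m : ℕ, f.natDegree ≤ k + m →
      ((fun g : Polynomial R => g.comp (X + 1) - g)^[k] f).natDegree ≤ m ∧
      ((fun g : Polynomial R => g.comp (X + 1) - g)^[k] f).coeff m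
        = (((m + k).descFactorial k : ℕ) : R) * f.coeff (k + m) := by
  intro k
  induction k with
  | zero =>
    intro m hm
    refine ⟨by simpa using hm, ?_⟩
    simp
  | succ k ih =>
    intro m hm
    rw [Function.iterate_succ_apply']
    have h1 := ih (m + 1) (by omega)
    refine ⟨D_natDegree_le _ _ h1.1, ?_⟩
    rw [D_coeff _ _ h1.1, h1.2, ← mul_assoc, ← Nat.cast_mul]
    congr 2
    · rw [show m + (k + 1) = m + 1 + k from by omega, Nat.descFactorial_succ,
        Nat.add_sub_cancel]
    · omega

lemma memRS_zero : MemRS p (0 : Polynomial (ℚ_[p] ⊗[ℤ_[p]] S)) :=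
  fun _ => ⟨0, by rw [eval_zero, TensorProduct.tmul_zero]⟩

lemma memRS_sub {f g : Polynomial (ℚ_[p] ⊗[ℤ_[p]] S)} (hf : MemRS p f) (hg : MemRS p g) :
    MemRS p (f - g) := by
  intro z
  obtain ⟨s1, h1⟩ := hf z
  obtain ⟨s2, h2⟩ := hg z
  exact ⟨s1 - s2, by rw [eval_sub, h1, h2, TensorProduct.tmul_sub]⟩

lemma memRS_neg {f : Polynomial (ℚ_[p] ⊗[ℤ_[p]] S)} (hf : MemRS p f) : MemRS p (-f) := by
  have := memRS_sub p (memRS_zero p (S := S)) hf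
  rwa [zero_sub] at this

lemma memRS_D {f : Polynomial (ℚ_[p] ⊗[ℤ_[p]] S)} (hf : MemRS p f) :
    MemRS p (f.comp (X + 1) - f) := by
  intro z
  obtain ⟨s1, h1⟩ := hf (z + 1)
  obtain ⟨s2, h2⟩ := hf z
  refine ⟨s1 - s2, ?_⟩
  have he : algebraMap ℤ_[p] (ℚ_[p] ⊗[ℤ_[p]] S) z + 1
      = algebraMap ℤ_[p] (ℚ_[p] ⊗[ℤ_[p]] S) (z + 1) := by rw [map_add, map_one]
  rw [eval_sub, eval_comp, eval_add, eval_X, eval_one, he, h1, h2, TensorProduct.tmul_sub]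

lemma memRS_D_iter {f : Polynomial (ℚ_[p] ⊗[ℤ_[p]] S)} (hf : MemRS p f) (k : ℕ) :
    MemRS p ((fun g : Polynomial (ℚ_[p] ⊗[ℤ_[p]] S) => g.comp (X + 1) - g)^[k] f) := by
  induction k with
  | zero => exact hf
  | succ k ih => rw [Function.iterate_succ_apply']; exact memRS_D p ih

noncomputable def bpA (S : Type*) [CommRing S] [Algebra ℤ_[p] S] (k : ℕ) :
    Polynomial (ℚ_[p] ⊗[ℤ_[p]] S) :=
  (bp p k).map (algebraMap ℚ_[p] (ℚ_[p] ⊗[ℤ_[p]] S))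

lemma memRS_C_tmul_mul_bpA (s : S) (k : ℕ) :
    MemRS p (C ((1 : ℚ_[p]) ⊗ₜ[ℤ_[p]] s) * bpA p S k) := by
  intro z
  refine ⟨(Ring.choose z k) • s, ?_⟩
  have h1 : algebraMap ℤ_[p] (ℚ_[p] ⊗[ℤ_[p]] S) z
      = algebraMap ℚ_[p] (ℚ_[p] ⊗[ℤ_[p]] S) ((z : ℚ_[p])) := rfl
  rw [eval_mul, eval_C, bpA, h1, eval_map, eval₂_at_apply, bp_eval_coe,
    Algebra.TensorProduct.algebraMap_apply, Algebra.algebraMap_self_apply,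
    Algebra.TensorProduct.tmul_mul_tmul, one_mul, mul_one,
    show ((Ring.choose z k : ℤ_[p]) : ℚ_[p]) = (Ring.choose z k) • (1 : ℚ_[p]) by
      rw [← PadicInt.algebraMap_apply, Algebra.algebraMap_eq_smul_one],
    TensorProduct.smul_tmul]

lemma bpA_natDegree_le (S : Type*) [CommRing S] [Algebra ℤ_[p] S] (k : ℕ) :
    (bpA p S k).natDegree ≤ k :=
  natDegree_map_le.trans (bp_natDegree_le p k)

lemma bpA_coeff_self (S : Type*) [CommRing S] [Algebra ℤ_[p] S] (k : ℕ) :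
    (bpA p S k).coeff k = algebraMap ℚ_[p] (ℚ_[p] ⊗[ℤ_[p]] S) ((k.factorial : ℚ_[p])⁻¹) := by
  rw [bpA, coeff_map, bp_coeff_self]

lemma bpA_diff (S : Type*) [CommRing S] [Algebra ℤ_[p] S] (k : ℕ) :
    (bpA p S (k + 1)).comp (X + 1) - bpA p S (k + 1) = bpA p S k := by
  have hX : (X + 1 : Polynomial (ℚ_[p] ⊗[ℤ_[p]] S))
      = Polynomial.map (algebraMap ℚ_[p] (ℚ_[p] ⊗[ℤ_[p]] S)) (X + 1) := by
    rw [Polynomial.map_add, map_X, Polynomial.map_one]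
  rw [bpA, bpA, hX, ← Polynomial.map_comp, ← Polynomial.map_sub, bp_diff]

lemma bpA_eval_zero (S : Type*) [CommRing S] [Algebra ℤ_[p] S] (k : ℕ) :
    (bpA p S (k + 1)).eval 0 = 0 := by
  rw [bpA, eval_zero_map, bp_eval_zero, map_zero]

lemma bpA_zero (S : Type*) [CommRing S] [Algebra ℤ_[p] S] : bpA p S 0 = 1 := by
  rw [bpA, bp, Nat.factorial_zero, Nat.cast_one, inv_one, C_1, one_mul, descPochhammer_zero,
    Polynomial.map_one]

lemma main_induction (n : ℕ) : ∀ Q : Polynomial (ℚ_[p] ⊗[ℤ_[p]] S), MemRS p Q →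
    Q.natDegree ≤ n →
    ∃ H : Polynomial (ℚ_[p] ⊗[ℤ_[p]] S), MemRS p H ∧ H.comp (X + 1) - H = -Q ∧
      H.eval 0 = 0 ∧ H.natDegree ≤ n + 1 := by
  induction n with
  | zero =>
    intro Q hQ hdeg
    obtain ⟨s, hs⟩ := hQ 0
    rw [map_zero] at hs
    have hQC : Q = C (Q.coeff 0) := eq_C_of_natDegree_le_zero hdeg
    have hs' : Q.coeff 0 = (1 : ℚ_[p]) ⊗ₜ[ℤ_[p]] s := by
      rw [coeff_zero_eq_eval_zero]; exact hs
    refine ⟨-(C (Q.coeff 0) * bpA p S 1), ?_, ?_, ?_, ?_⟩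
    · rw [hs']; exact memRS_neg p (memRS_C_tmul_mul_bpA p s 1)
    · have hb : (bpA p S 1).comp (X + 1) - bpA p S 1 = bpA p S 0 := bpA_diff p S 0
      have hexp : (-(C (Q.coeff 0) * bpA p S 1)).comp (X + 1) - -(C (Q.coeff 0) * bpA p S 1)
          = -(C (Q.coeff 0) * ((bpA p S 1).comp (X + 1) - bpA p S 1)) := by
        rw [neg_comp, mul_comp, C_comp]; ring
      rw [hexp, hb, bpA_zero, mul_one, ← hQC]
    · rw [eval_neg, eval_mul, show (1 : ℕ) = 0 + 1 from rfl, bpA_eval_zero p S 0, mul_zero,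
        neg_zero]
    · rw [natDegree_neg]
      exact (natDegree_C_mul_le _ _).trans (bpA_natDegree_le p S 1)
  | succ n ih =>
    intro Q hQ hdeg
    have hit := D_iter Q (n + 1) 0 (by simpa using hdeg)
    obtain ⟨s, hs⟩ := memRS_D_iter p hQ (n + 1) 0
    rw [map_zero] at hs
    set a := ((fun g : Polynomial (ℚ_[p] ⊗[ℤ_[p]] S) => g.comp (X + 1) - g)^[n + 1] Q).coeff 0
      with hadef
    have has : a = (1 : ℚ_[p]) ⊗ₜ[ℤ_[p]] s := by
      rw [hadef, coeff_zero_eq_eval_zero]; exact hs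
    have hafac : a = (((n + 1).factorial : ℕ) : ℚ_[p] ⊗[ℤ_[p]] S) * Q.coeff (n + 1) := by
      rw [hit.2, Nat.zero_add, Nat.descFactorial_self, Nat.add_zero]
    have hb1deg : (bpA p S (n + 1)).natDegree ≤ n + 1 := bpA_natDegree_le p S (n + 1)
    have hcan : (((n + 1).factorial : ℕ) : ℚ_[p] ⊗[ℤ_[p]] S)
        * algebraMap ℚ_[p] (ℚ_[p] ⊗[ℤ_[p]] S) (((n + 1).factorial : ℚ_[p])⁻¹) = 1 := by
      rw [← map_natCast (algebraMap ℚ_[p] (ℚ_[p] ⊗[ℤ_[p]] S)), ← map_mul,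
        mul_inv_cancel₀ (fact_ne p _), map_one]
    have hQ'mem : MemRS p (Q - C a * bpA p S (n + 1)) := by
      rw [has]; exact memRS_sub p hQ (memRS_C_tmul_mul_bpA p s (n + 1))
    have hQ'deg : (Q - C a * bpA p S (n + 1)).natDegree ≤ n := by
      rw [natDegree_le_iff_coeff_eq_zero]
      intro j hj
      rcases eq_or_lt_of_le (Nat.succ_le_of_lt hj) with hj1 | hj1
      · rw [coeff_sub, coeff_C_mul, ← hj1, bpA_coeff_self, hafac]
        have hexp : Q.coeff (n + 1)
            - (((n + 1).factorial : ℕ) : ℚ_[p] ⊗[ℤ_[p]] S) * Q.coeff (n + 1)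
              * algebraMap ℚ_[p] (ℚ_[p] ⊗[ℤ_[p]] S) (((n + 1).factorial : ℚ_[p])⁻¹)
            = Q.coeff (n + 1) * (1 - (((n + 1).factorial : ℕ) : ℚ_[p] ⊗[ℤ_[p]] S)
              * algebraMap ℚ_[p] (ℚ_[p] ⊗[ℤ_[p]] S) (((n + 1).factorial : ℚ_[p])⁻¹)) := by
          ring
        rw [hexp, hcan, sub_self, mul_zero]
      · rw [coeff_sub, coeff_eq_zero_of_natDegree_lt (lt_of_le_of_lt hdeg hj1),
          coeff_eq_zero_of_natDegree_lt
            (lt_of_le_of_lt ((natDegree_C_mul_le _ _).trans hb1deg) hj1), sub_zero]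
    obtain ⟨H', hH'mem, hH'diff, hH'0, hH'deg⟩ := ih _ hQ'mem hQ'deg
    have hCmem : MemRS p (C a * bpA p S (n + 2)) := by
      rw [has]; exact memRS_C_tmul_mul_bpA p s (n + 2)
    refine ⟨H' - C a * bpA p S (n + 2), memRS_sub p hH'mem hCmem, ?_, ?_, ?_⟩
    · have hb : (bpA p S (n + 2)).comp (X + 1) - bpA p S (n + 2) = bpA p S (n + 1) :=
        bpA_diff p S (n + 1)
      have hexp : (H' - C a * bpA p S (n + 2)).comp (X + 1) - (H' - C a * bpA p S (n + 2))
          = (H'.comp (X + 1) - H')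
            - C a * ((bpA p S (n + 2)).comp (X + 1) - bpA p S (n + 2)) := by
        rw [sub_comp, mul_comp, C_comp]; ring
      rw [hexp, hb, hH'diff]; ring
    · rw [eval_sub, hH'0, eval_mul, eval_C, bpA_eval_zero p S (n + 1), mul_zero, sub_zero]
    · refine (natDegree_sub_le _ _).trans (max_le (hH'deg.trans (by omega)) ?_)
      exact ((natDegree_C_mul_le _ _).trans (bpA_natDegree_le p S (n + 2))).trans (by omega)

end Aux

/-- **Solving the difference equation in `R(S)` (Lemma 3.6).** Let `p` be a
prime and `S` a `ℤ_p`-algebra, finitely generated and torsion-free as a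
`ℤ_p`-module. Given `Q₁, …, Q_d ∈ R(S)` of degree at most `N`, there exist
`h₁, …, h_d ∈ R(S)` with `hᵢ(z+1) ≡ hᵢ(z) − Qᵢ(z) (mod p·R(S))`,
`hᵢ(0) = 0`, and `deg hᵢ ≤ N + 1`. -/
theorem stmt11 (p : ℕ) [Fact p.Prime] (S : Type*) [CommRing S] [Algebra ℤ_[p] S]
    [Module.Finite ℤ_[p] S] [NoZeroSMulDivisors ℤ_[p] S] (d N : ℕ)
    (Q : Fin d → Polynomial (ℚ_[p] ⊗[ℤ_[p]] S))
    (hQmem : ∀ i, MemRS p (Q i)) (hQdeg : ∀ i, (Q i).natDegree ≤ N) :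
    ∃ h : Fin d → Polynomial (ℚ_[p] ⊗[ℤ_[p]] S),
      (∀ i, MemRS p (h i)) ∧
      (∀ i, ∃ g : Polynomial (ℚ_[p] ⊗[ℤ_[p]] S), MemRS p g ∧
        (h i).comp (Polynomial.X + 1) - ((h i) - Q i)
          = (p : Polynomial (ℚ_[p] ⊗[ℤ_[p]] S)) * g) ∧
      (∀ i, (h i).eval 0 = 0) ∧
      (∀ i, (h i).natDegree ≤ N + 1) := by
  choose H hmem hdiff h0 hdegH using fun i => main_induction p N (Q i) (hQmem i) (hQdeg i)
  refine ⟨H, hmem, fun i => ⟨0, memRS_zero p, ?_⟩, h0, hdegH⟩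
  have hexp : (H i).comp (Polynomial.X + 1) - (H i - Q i)
      = ((H i).comp (Polynomial.X + 1) - H i) + Q i := by ring
  rw [hexp, hdiff i]
  ring
end

section
/- Let A be a finitely generated commutative algebra over an infinite field K and let φ : A → A be a K-algebra automorphism. Then there exist a natural number N, a surjective K-algebra homomorphism ν : K[x₁, …, x_N] → A, and a K-algebra automorphism φ̃ of K[x₁, …, x_N] such that: (1) ν ∘ φ̃^n = φ^n ∘ ν for all integers n; and (2) for all ideals I and J of A and all integers n, φ^n(I) ⊇ J if and only if φ̃^n(ν^{−1}(I)) ⊇ ν^{−1}(J). -/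
/-!
Choose generators `a` of `A`, i.e. a surjection `K[x] → A`, `x ↦ a`, and lifts `f`, `g` of
`φ(a)`, `φ⁻¹(a)`. On the doubled ring `K[x, y]` the composite of the triangular automorphisms
`y ↦ y - g(x)`, the swap `x ↔ y`, and `y ↦ y + f(x)` is an automorphism `φ̃` with
`x ↦ y + f(x)`, `y ↦ x - g(y + f(x))`, and the surjection `ν : x ↦ a, y ↦ 0` satisfies
`ν ∘ φ̃ = φ ∘ ν`, since `g(φ(a)) = φ(φ⁻¹(a)) = a`. The intertwining passes to all integer
powers, and then `φ̃ⁿ(ν⁻¹(I)) = ν⁻¹(φⁿ(I))`, so the comparison of ideals is pulled back along the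
surjection `ν`.
-/

open MvPolynomial Function

theorem Function.Semiconj.algEquiv_zpow {R A B : Type*} [CommSemiring R] [Semiring A] [Semiring B]
    [Algebra R A] [Algebra R B] {ν : B → A} {ψ : B ≃ₐ[R] B} {φ : A ≃ₐ[R] A}
    (h : Semiconj ν ψ φ) (n : ℤ) : Semiconj ν ⇑(ψ ^ n) ⇑(φ ^ n) := by
  have hpow (k : ℕ) : Semiconj ν ⇑(ψ ^ k) ⇑(φ ^ k) := by
    simpa only [AlgEquiv.coe_pow] using h.iterate_right k
  cases n with
  | ofNat k => exact hpow k
  | negSucc k =>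
    simp only [zpow_negSucc, AlgEquiv.aut_inv]
    exact (hpow (k + 1)).inverses_right (ψ ^ (k + 1)).apply_symm_apply
      (φ ^ (k + 1)).symm_apply_apply

theorem Ideal.map_comap_of_semiconj {R A B : Type*} [CommSemiring R] [CommRing A] [CommRing B]
    [Algebra R A] [Algebra R B] {ν : B →ₐ[R] A} {ψ : B ≃ₐ[R] B} {φ : A ≃ₐ[R] A}
    (h : Semiconj ν ψ φ) (I : Ideal A) :
    (I.comap ν).map ψ = (I.map φ).comap ν :=
  Ideal.ext fun x => by
    change x ∈ (I.comap ν).map (ψ : B ≃+* B) ↔ ν x ∈ I.map (φ : A ≃+* A)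
    rw [← Ideal.comap_symm, ← Ideal.comap_symm, Ideal.mem_comap, Ideal.mem_comap, Ideal.mem_comap]
    exact iff_of_eq (congrArg (· ∈ I) (h.inverses_right ψ.apply_symm_apply φ.symm_apply_apply x))

namespace MvPolynomial

variable {R : Type*} [CommRing R] {σ τ : Type*}

noncomputable def shear (c : τ → MvPolynomial σ R) :
    MvPolynomial (σ ⊕ τ) R →ₐ[R] MvPolynomial (σ ⊕ τ) R :=
  aeval (Sum.elim (X ∘ Sum.inl) fun j => X (Sum.inr j) + rename Sum.inl (c j))

theorem aeval_shear {S : Type*} [CommSemiring S] [Algebra R S] (v : σ ⊕ τ → S)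
    (c : τ → MvPolynomial σ R) (p : MvPolynomial (σ ⊕ τ) R) :
    aeval v (shear c p) =
      aeval (Sum.elim (v ∘ Sum.inl) fun j => v (Sum.inr j) + aeval (v ∘ Sum.inl) (c j)) p := by
  rw [shear, comp_aeval_apply]
  congr 1
  ext (i | j) <;> simp [aeval_rename]

@[simp]
theorem shear_X_inl (c : τ → MvPolynomial σ R) (i : σ) :
    shear c (X (Sum.inl i)) = X (Sum.inl i) := by
  simp [shear]

@[simp]
theorem shear_X_inr (c : τ → MvPolynomial σ R) (j : τ) :
    shear c (X (Sum.inr j)) = X (Sum.inr j) + rename Sum.inl (c j) := by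
  simp [shear]

@[simp]
theorem shear_rename_inl (c : τ → MvPolynomial σ R) (p : MvPolynomial σ R) :
    shear c (rename Sum.inl p) = rename Sum.inl p :=
  AlgHom.congr_fun (φ₁ := (shear c).comp (rename Sum.inl)) (algHom_ext fun i => by simp) p

theorem shear_comp_shear (c d : τ → MvPolynomial σ R) :
    (shear c).comp (shear d) = shear (c + d) := by
  ext (i | j) : 2 <;> simp [add_assoc]

theorem shear_zero : shear (0 : τ → MvPolynomial σ R) = AlgHom.id R _ := by
  ext (i | j) : 2 <;> simp

noncomputable def shearEquiv (c : τ → MvPolynomial σ R) :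
    MvPolynomial (σ ⊕ τ) R ≃ₐ[R] MvPolynomial (σ ⊕ τ) R :=
  AlgEquiv.ofAlgHom (shear c) (shear (-c)) (by simp [shear_comp_shear, shear_zero])
    (by simp [shear_comp_shear, shear_zero])

variable {A : Type*} [CommRing A] [Algebra R A]

noncomputable def shearSwapShear (f g : σ → MvPolynomial σ R) :
    MvPolynomial (σ ⊕ σ) R ≃ₐ[R] MvPolynomial (σ ⊕ σ) R :=
  ((shearEquiv (-g)).trans (renameEquiv R (Equiv.sumComm σ σ))).trans (shearEquiv f)

theorem semiconj_aeval_shearSwapShear (φ : A ≃ₐ[R] A) {a : σ → A} {f g : σ → MvPolynomial σ R}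
    (hf : ∀ i, aeval a (f i) = φ (a i)) (hg : ∀ i, aeval a (g i) = φ.symm (a i)) :
    Semiconj (aeval (Sum.elim a 0)) (shearSwapShear f g) φ := by
  have hφg (j : σ) : aeval (fun i => φ (a i)) (g j) = a j := by
    simpa [hg] using (comp_aeval_apply (f := a) (φ : A →ₐ[R] A) (g j)).symm
  intro p
  change aeval _ (shear f (rename _ (shear (-g) p))) = _
  rw [aeval_shear, aeval_rename, aeval_shear, ← AlgEquiv.coe_toAlgHom, comp_aeval_apply]
  congr 1
  ext (i | j) <;> simp [hf, hφg]

theorem exists_sum_surjective_semiconj {a : σ → A}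
    (ha : Surjective (aeval a : MvPolynomial σ R →ₐ[R] A)) (φ : A ≃ₐ[R] A) :
    ∃ (ν : MvPolynomial (σ ⊕ σ) R →ₐ[R] A) (φt : MvPolynomial (σ ⊕ σ) R ≃ₐ[R] _),
      Surjective ν ∧ Semiconj ν φt φ := by
  choose f hf using fun i => ha (φ (a i))
  choose g hg using fun i => ha (φ.symm (a i))
  refine ⟨aeval (Sum.elim a 0), shearSwapShear f g, fun y => ?_,
    semiconj_aeval_shearSwapShear φ hf hg⟩
  obtain ⟨p, rfl⟩ := ha y
  exact ⟨rename Sum.inl p, by rw [aeval_rename, Sum.elim_comp_inl]⟩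

end MvPolynomial

theorem Algebra.FiniteType.exists_surjective_semiconj {R A : Type*} [CommRing R] [CommRing A]
    [Algebra R A] [Algebra.FiniteType R A] (φ : A ≃ₐ[R] A) :
    ∃ (N : ℕ) (ν : MvPolynomial (Fin N) R →ₐ[R] A) (φt : MvPolynomial (Fin N) R ≃ₐ[R] _),
      Surjective ν ∧ Semiconj ν φt φ := by
  obtain ⟨m, ν₀, hν₀⟩ := Algebra.FiniteType.iff_quotient_mvPolynomial''.mp ‹_›
  rw [aeval_unique ν₀] at hν₀
  obtain ⟨ν, φt, hν, hφt⟩ := exists_sum_surjective_semiconj hν₀ φ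
  let e : MvPolynomial (Fin m ⊕ Fin m) R ≃ₐ[R] _ := renameEquiv R finSumFinEquiv
  refine ⟨m + m, ν.comp e.symm, (e.symm.trans φt).trans e, hν.comp e.symm.surjective,
    fun x => ?_⟩
  simpa using hφt (e.symm x)

theorem stmt17_general {K A : Type*} [Field K] [CommRing A] [Algebra K A]
    [Algebra.FiniteType K A] (φ : A ≃ₐ[K] A) :
    ∃ (N : ℕ) (ν : MvPolynomial (Fin N) K →ₐ[K] A)
      (φt : MvPolynomial (Fin N) K ≃ₐ[K] MvPolynomial (Fin N) K),
      Function.Surjective ν ∧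
      (∀ (n : ℤ) (x : MvPolynomial (Fin N) K), ν ((φt ^ n) x) = (φ ^ n) (ν x)) ∧
      (∀ (I J : Ideal A) (n : ℤ),
        J ≤ I.map (φ ^ n : A ≃ₐ[K] A) ↔
          J.comap ν ≤ (I.comap ν).map
            (φt ^ n : MvPolynomial (Fin N) K ≃ₐ[K] MvPolynomial (Fin N) K)) := by
  obtain ⟨N, ν, φt, hν, hφt⟩ := Algebra.FiniteType.exists_surjective_semiconj φ
  refine ⟨N, ν, φt, hν, hφt.algEquiv_zpow, fun I J n => ?_⟩
  rw [Ideal.map_comap_of_semiconj (hφt.algEquiv_zpow n),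
    Ideal.comap_le_comap_iff_of_surjective ν hν]

/-- **Proposition 5.2 (via Srinivas's theorem).** Let `A` be a finitely
generated commutative algebra over an infinite field `K` and let `φ : A → A`
be a `K`-algebra automorphism. Then there exist `N`, a surjective `K`-algebra
homomorphism `ν : K[x₁, …, x_N] → A`, and a `K`-algebra automorphism `φ̃` of
`K[x₁, …, x_N]` such that (1) `ν ∘ φ̃ⁿ = φⁿ ∘ ν` for all integers `n`, and
(2) for all ideals `I`, `J` of `A` and all integers `n`, `φⁿ(I) ⊇ J` iff
`φ̃ⁿ(ν⁻¹(I)) ⊇ ν⁻¹(J)`. -/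
theorem stmt17 {K A : Type*} [Field K] [Infinite K] [CommRing A] [Algebra K A]
    [Algebra.FiniteType K A] (φ : A ≃ₐ[K] A) :
    ∃ (N : ℕ) (ν : MvPolynomial (Fin N) K →ₐ[K] A)
      (φt : MvPolynomial (Fin N) K ≃ₐ[K] MvPolynomial (Fin N) K),
      Function.Surjective ν ∧
      (∀ (n : ℤ) (x : MvPolynomial (Fin N) K), ν ((φt ^ n) x) = (φ ^ n) (ν x)) ∧
      (∀ (I J : Ideal A) (n : ℤ),
        J ≤ I.map (φ ^ n : A ≃ₐ[K] A) ↔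
          J.comap ν ≤ (I.comap ν).map
            (φt ^ n : MvPolynomial (Fin N) K ≃ₐ[K] MvPolynomial (Fin N) K)) :=
  stmt17_general φ
end

section
/- Let p be a prime, let K = 𝔽_p(t) be the field of rational functions over the finite field 𝔽_p, and let A = K[x, y]. Define the K-algebra automorphism σ : A → A by σ(x) = tx and σ(y) = (1+t)y. Let J = (x − y + 1) and I = (x − 1, y − 1). Then for n ∈ ℤ, σ^n(J) ⊆ I if and only if n ∈ {1, p, p², p³, …}; in particular, the key identity is that for a positive integer n, t^n − (1+t)^n + 1 = 0 in 𝔽_p(t) if and only if n is a power of p. Consequently the set {n ∈ ℤ : σ^n(I) ⊇ J} = {−1, −p, −p², …} does not have the two-sided SML property, showing the characteristic-zero hypothesis in the generalized SML theorem for ideal inclusions is necessary. -/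
/-!
`σⁿ` scales `x` by `tⁿ` and `y` by `(1+t)ⁿ`, so `σⁿ(J) ⊆ I` says that `σⁿ(x - y + 1)` vanishes
at the point `(1, 1)`, i.e. `tⁿ - (1+t)ⁿ + 1 = 0` in `𝔽_p(t)`. For `n > 0` this is the polynomial
identity `(1+X)ⁿ = 1 + Xⁿ`: writing `n = pᵏm` with `p ∤ m`, Frobenius reduces it to
`(1+X)ᵐ = 1 + Xᵐ`, and comparing coefficients of `X` forces `m = 1`. For `n < 0`, clearing
denominators gives a polynomial with constant term `1`.

Since `J ⊆ σⁿ(I)` iff `σ⁻ⁿ(J) ⊆ I`, the second set is `{-pᵏ}`. It is infinite and bounded above,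
whereas in a set with the SML property that is bounded above every progression must be a
singleton, so the set is finite.
-/

/-- A set `S ⊆ ℤ` has the two-sided SML property if it is a finite union of
complete doubly infinite arithmetic progressions `{a*n + b : n ∈ ℤ}` (allowing
`a = 0`, which gives singletons), together with a finite set. -/
def TwoSidedSML (S : Set ℤ) : Prop :=
  ∃ (P : Finset (ℤ × ℤ)) (F : Set ℤ), F.Finite ∧
    S = (⋃ q ∈ P, {k : ℤ | ∃ n : ℤ, k = q.1 * n + q.2}) ∪ F

namespace Polynomial

theorem one_add_X_pow_eq_one_add_X_pow_iff {R : Type*} [CommRing R] (p : ℕ) [hp : Fact p.Prime]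
    [CharP R p] (n : ℕ) :
    (1 + X : R[X]) ^ n = 1 + X ^ n ↔ ∃ k, n = p ^ k := by
  have : Nontrivial R := CharP.nontrivial_of_char_ne_one hp.out.ne_one
  constructor
  · intro h
    rcases eq_or_ne n 0 with rfl | hn
    · simpa using congrArg (coeff · 0) h
    obtain ⟨k, m, hpm, rfl⟩ := Nat.exists_eq_pow_mul_and_not_dvd hn p hp.out.ne_one
    have hm : (1 + X : R[X]) ^ m = 1 + X ^ m := by
      apply expand_injective (pow_pos hp.out.pos k)
      simpa [pow_mul, add_pow_char_pow] using h
    have hm1 : m = 1 := by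
      by_contra hm1
      have := congrArg (coeff · 1) hm
      simp [coeff_one_add_X_pow, coeff_one, coeff_X_pow, Ne.symm hm1] at this
      exact hpm ((CharP.cast_eq_zero_iff R p m).1 this)
    exact ⟨k, by rw [hm1, mul_one]⟩
  · rintro ⟨k, rfl⟩
    rw [add_pow_char_pow, one_pow]

end Polynomial

namespace RatFunc

variable {K : Type*} [Field K]

theorem X_pow_sub_one_add_X_pow_add_one_eq_zero_iff (p : ℕ) [Fact p.Prime] [CharP K p] (n : ℕ) :
    (X : RatFunc K) ^ n - (1 + X) ^ n + 1 = 0 ↔ ∃ k, n = p ^ k := by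
  rw [← Polynomial.one_add_X_pow_eq_one_add_X_pow_iff (R := K) p,
    ← (algebraMap_injective K).eq_iff,
    show (X : RatFunc K) ^ n - (1 + X) ^ n + 1 = (1 + X ^ n) - (1 + X) ^ n by ring, sub_eq_zero,
    eq_comm]
  simp

theorem one_add_X_ne_zero : (1 + X : RatFunc K) ≠ 0 := by
  simpa [add_comm] using (algebraMap_injective K).ne (Polynomial.X_add_C_ne_zero (1 : K))

theorem X_zpow_neg_sub_one_add_X_zpow_neg_add_one_ne_zero {m : ℕ} (hm : m ≠ 0) :
    (X : RatFunc K) ^ (-(m : ℤ)) - (1 + X) ^ (-(m : ℤ)) + 1 ≠ 0 := by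
  have hnum : ((1 + X) ^ m - X ^ m + X ^ m * (1 + X) ^ m : RatFunc K) ≠ 0 := by
    have hpoly : ((1 + Polynomial.X) ^ m - Polynomial.X ^ m
        + Polynomial.X ^ m * (1 + Polynomial.X) ^ m : Polynomial K) ≠ 0 := fun h => by
      simpa [hm] using congrArg (Polynomial.eval 0) h
    simpa using (algebraMap_injective K).ne hpoly
  have hX : (X : RatFunc K) ≠ 0 := X_ne_zero
  have h1X : (1 + X : RatFunc K) ≠ 0 := one_add_X_ne_zero
  rw [zpow_neg, zpow_neg, zpow_natCast, zpow_natCast]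
  field_simp
  exact div_ne_zero hnum (mul_ne_zero (pow_ne_zero _ hX) (pow_ne_zero _ h1X))

theorem X_zpow_sub_one_add_X_zpow_add_one_eq_zero_iff (p : ℕ) [hp : Fact p.Prime] [CharP K p]
    (n : ℤ) : (X : RatFunc K) ^ n - (1 + X) ^ n + 1 = 0 ↔ ∃ k : ℕ, n = (p : ℤ) ^ k := by
  have hnat (m : ℕ) : (X : RatFunc K) ^ (m : ℤ) - (1 + X) ^ (m : ℤ) + 1 = 0 ↔
      ∃ k : ℕ, (m : ℤ) = (p : ℤ) ^ k := by
    simp only [zpow_natCast, X_pow_sub_one_add_X_pow_add_one_eq_zero_iff p]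
    norm_cast
  obtain ⟨m, rfl | rfl⟩ := Int.eq_nat_or_neg n
  · exact hnat m
  rcases eq_or_ne m 0 with rfl | hm
  · exact hnat 0
  refine iff_of_false (X_zpow_neg_sub_one_add_X_zpow_neg_add_one_ne_zero hm) ?_
  rintro ⟨k, hk⟩
  have : (0 : ℤ) < (p : ℤ) ^ k := pow_pos (by exact_mod_cast hp.out.pos) k
  omega

end RatFunc

namespace MvPolynomial

theorem span_range_X_sub_C_eq_ker_eval {R σ : Type*} [CommRing R] (x : σ → R) :
    Ideal.span (Set.range fun i => X i - C (x i)) =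
      RingHom.ker (eval x : MvPolynomial σ R →+* R) := by
  refine le_antisymm (Ideal.span_le.2 ?_) fun f hf => ?_
  · rintro _ ⟨i, rfl⟩
    simp
  have key (g : MvPolynomial σ R) :
      g - C (eval x g) ∈ Ideal.span (Set.range fun i => X i - C (x i)) := by
    induction g using MvPolynomial.induction_on with
    | C c => simp
    | add f g hf hg => simpa [add_sub_add_comm] using Ideal.add_mem _ hf hg
    | mul_X f i hf =>
      have hXi : X i - C (x i) ∈ Ideal.span (Set.range fun i => X i - C (x i)) :=
        Ideal.subset_span ⟨i, rfl⟩
      have hrw : f * X i - C (eval x (f * X i))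
          = f * (X i - C (x i)) + C (x i) * (f - C (eval x f)) := by
        simp only [eval_X, map_mul]
        ring
      rw [hrw]
      exact Ideal.add_mem _ (Ideal.mul_mem_left _ _ hXi) (Ideal.mul_mem_left _ _ hf)
  simpa [RingHom.mem_ker.1 hf] using key f

end MvPolynomial

theorem AlgEquiv.zpow_apply_of_apply_eq_smul {K A : Type*} [Field K] [Ring A] [Algebra K A]
    (τ : A ≃ₐ[K] A) {c : K} (hc : c ≠ 0) {x : A} (h : τ x = c • x) (n : ℤ) :
    (τ ^ n) x = c ^ n • x := by
  have hinv : τ⁻¹ x = c⁻¹ • x := by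
    apply τ.injective
    rw [AlgEquiv.aut_inv, τ.apply_symm_apply, map_smul, h, inv_smul_smul₀ hc]
  induction n using Int.induction_on with
  | zero => simp
  | succ k ih =>
    rw [zpow_add_one, AlgEquiv.mul_apply, h, map_smul, ih, smul_smul, zpow_add_one₀ hc, mul_comm]
  | pred k ih =>
    rw [zpow_sub_one, AlgEquiv.mul_apply, hinv, map_smul, ih, smul_smul, zpow_sub_one₀ hc, mul_comm]

theorem Ideal.le_map_iff_map_inv_le {R A : Type*} [CommSemiring R] [Semiring A] [Algebra R A]
    (e : A ≃ₐ[R] A) (I J : Ideal A) : J ≤ I.map e ↔ J.map e⁻¹ ≤ I := by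
  rw [Ideal.map_le_iff_le_comap, AlgEquiv.aut_inv]
  exact iff_of_eq (congrArg (J ≤ ·) (Ideal.comap_symm e.toRingEquiv).symm)

theorem not_bddAbove_setOf_eq_mul_add {a : ℤ} (ha : a ≠ 0) (b : ℤ) :
    ¬ BddAbove {k : ℤ | ∃ n : ℤ, k = a * n + b} := by
  rintro ⟨M, hM⟩
  have hle : a * (a * (|M| + |b| + 1)) + b ≤ M := hM ⟨_, rfl⟩
  have ha2 : 1 ≤ a * a := by rcases lt_or_gt_of_ne ha with h | h <;> nlinarith
  nlinarith [le_abs_self M, neg_abs_le b, abs_nonneg M, abs_nonneg b]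

theorem TwoSidedSML.finite_of_bddAbove {S : Set ℤ} (h : TwoSidedSML S) (hS : BddAbove S) :
    S.Finite := by
  obtain ⟨P, F, hF, rfl⟩ := h
  refine (P.finite_toSet.biUnion fun q hqP => ?_).union hF
  have hq : q.1 = 0 := by
    by_contra hq
    exact not_bddAbove_setOf_eq_mul_add hq q.2
      (hS.mono fun k hk => Or.inl (Set.mem_biUnion hqP hk))
  exact (Set.finite_singleton q.2).subset (by rintro _ ⟨n, rfl⟩; simp [hq])

theorem not_twoSidedSML_setOf_eq_neg_pow {b : ℕ} (hb : 2 ≤ b) :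
    ¬ TwoSidedSML {n : ℤ | ∃ k : ℕ, n = -((b : ℤ) ^ k)} := by
  set S := {n : ℤ | ∃ k : ℕ, n = -((b : ℤ) ^ k)}
  have hbdd : BddAbove S := ⟨0, by
    rintro _ ⟨k, rfl⟩
    simp only [Left.neg_nonpos_iff]
    positivity⟩
  have hinf : S.Infinite := Set.infinite_of_injective_forall_mem
    (fun i j hij => Nat.pow_right_injective hb (by exact_mod_cast neg_inj.1 hij))
    (fun k => ⟨k, rfl⟩)
  exact fun hSML => hinf (hSML.finite_of_bddAbove hbdd)

open MvPolynomial in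
/-- **Lech's characteristic-`p` counterexample (Example 6.5).**
Let `p` be a prime, `K = 𝔽_p(t)`, `A = K[x, y]`, and let `σ` be the
`K`-algebra automorphism of `A` with `σ(x) = t·x` and `σ(y) = (1+t)·y`.
Let `J = (x − y + 1)` and `I = (x − 1, y − 1)`. Then:
(key identity) for `n > 0`, `tⁿ − (1+t)ⁿ + 1 = 0` iff `n` is a power of `p`;
`σⁿ(J) ⊆ I` iff `n ∈ {1, p, p², …}`; consequently
`{n ∈ ℤ : σⁿ(I) ⊇ J} = {−1, −p, −p², …}`, and this set does not have the
two-sided SML property. -/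
theorem stmt19 (p : ℕ) [Fact p.Prime]
    (σ : MvPolynomial (Fin 2) (RatFunc (ZMod p)) ≃ₐ[RatFunc (ZMod p)]
         MvPolynomial (Fin 2) (RatFunc (ZMod p)))
    (hx : σ (MvPolynomial.X 0) = MvPolynomial.C (RatFunc.X) * MvPolynomial.X 0)
    (hy : σ (MvPolynomial.X 1) = MvPolynomial.C (1 + RatFunc.X) * MvPolynomial.X 1)
    (J : Ideal (MvPolynomial (Fin 2) (RatFunc (ZMod p))))
    (I : Ideal (MvPolynomial (Fin 2) (RatFunc (ZMod p))))
    (hJ : J = Ideal.span {MvPolynomial.X 0 - MvPolynomial.X 1 + 1})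
    (hI : I = Ideal.span {MvPolynomial.X 0 - 1, MvPolynomial.X 1 - 1}) :
    (∀ n : ℕ, 0 < n →
      ((RatFunc.X : RatFunc (ZMod p)) ^ n - (1 + RatFunc.X) ^ n + 1 = 0 ↔
        ∃ k : ℕ, n = p ^ k)) ∧
    (∀ n : ℤ,
      J.map (σ ^ n : MvPolynomial (Fin 2) (RatFunc (ZMod p)) ≃ₐ[RatFunc (ZMod p)]
        MvPolynomial (Fin 2) (RatFunc (ZMod p))) ≤ I ↔ ∃ k : ℕ, n = (p : ℤ) ^ k) ∧
    ({n : ℤ | J ≤ I.map (σ ^ n : MvPolynomial (Fin 2) (RatFunc (ZMod p)) ≃ₐ[RatFunc (ZMod p)]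
        MvPolynomial (Fin 2) (RatFunc (ZMod p)))} = {n : ℤ | ∃ k : ℕ, n = -((p : ℤ) ^ k)}) ∧
    ¬ TwoSidedSML {n : ℤ | J ≤ I.map (σ ^ n : MvPolynomial (Fin 2) (RatFunc (ZMod p))
        ≃ₐ[RatFunc (ZMod p)] MvPolynomial (Fin 2) (RatFunc (ZMod p)))} := by
  have hσx (n : ℤ) : (σ ^ n) (X 0) = RatFunc.X ^ n • X (0 : Fin 2) :=
    σ.zpow_apply_of_apply_eq_smul RatFunc.X_ne_zero (by rw [hx, C_mul']) n
  have hσy (n : ℤ) : (σ ^ n) (X 1) = (1 + RatFunc.X) ^ n • X (1 : Fin 2) :=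
    σ.zpow_apply_of_apply_eq_smul RatFunc.one_add_X_ne_zero (by rw [hy, C_mul']) n
  have hI_ker : I = RingHom.ker (eval fun _ => 1) := by
    rw [hI, ← span_range_X_sub_C_eq_ker_eval]
    congr 1
    ext f
    simp [Fin.exists_fin_two, eq_comm]
  have hmap_le (n : ℤ) : J.map (σ ^ n) ≤ I ↔ ∃ k : ℕ, n = (p : ℤ) ^ k := by
    rw [hJ, Ideal.map_span, Set.image_singleton, Ideal.span_le, Set.singleton_subset_iff,
      SetLike.mem_coe, hI_ker, RingHom.mem_ker,
      ← RatFunc.X_zpow_sub_one_add_X_zpow_add_one_eq_zero_iff (K := ZMod p) p n]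
    simp [hσx, hσy, smul_eval]
  have hle_map : {n : ℤ | J ≤ I.map (σ ^ n)} = {n : ℤ | ∃ k : ℕ, n = -((p : ℤ) ^ k)} := by
    ext n
    simp only [Set.mem_ofPred_eq, Ideal.le_map_iff_map_inv_le, ← zpow_neg, hmap_le,
      neg_eq_iff_eq_neg]
  refine ⟨fun n _ => RatFunc.X_pow_sub_one_add_X_pow_add_one_eq_zero_iff p n, hmap_le,
    hle_map, ?_⟩
  rw [hle_map]
  exact not_twoSidedSML_setOf_eq_neg_pow (Fact.out : p.Prime).two_le
end
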